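/- Let B ∈ ℝ^{n×m} with B ≥ 0 entrywise, A ∈ ℝ^{n×p}, g ∈ ℝⁿ, and let s̲ ≤ s̄ be vectors in ℝᵐ. Suppose there exist x ≥ 0 and a nonnegative matrix α ∈ ℝ^{n×m} such that for every row i: (i) Aᵢx + Bᵢs̲ + Σⱼ αᵢⱼ ≤ gᵢ, and (ii) αᵢⱼ ≥ Bᵢⱼ(s̄ⱼ − s̲ⱼ) for all j. Then for every y with s̲ ≤ y ≤ s̄, the pair (x, y) satisfies Ax + By ≤ g. In other words, the whole interval [s̲, s̄] is admissible: every point in it is feasible with the same x. -/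

import Mathlib

/-! Since `B ≥ 0`, `B y ≤ B s̄ = B s̲ + B (s̄ - s̲)`, and row `i` of the last term is at most
`∑ⱼ αᵢⱼ`; condition (i) then absorbs it. -/

open Matrix

theorem Matrix.mulVec_mono_of_nonneg {R ι κ : Type*} [Fintype κ] [Semiring R] [PartialOrder R]
    [IsOrderedRing R] {B : Matrix ι κ R} (hB : ∀ i j, 0 ≤ B i j) {u v : κ → R} (huv : u ≤ v) :
    B *ᵥ u ≤ B *ᵥ v :=
  fun i => dotProduct_le_dotProduct_of_nonneg_left huv (hB i)

theorem Matrix.mulVec_apply_le_mulVec_add_sum {R ι κ : Type*} [Fintype κ] [Ring R]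
    [PartialOrder R] [IsOrderedRing R] {B α : Matrix ι κ R} {lo hi y : κ → R}
    (hB : ∀ i j, 0 ≤ B i j) (hy : y ≤ hi) (hα : ∀ i j, B i j * (hi j - lo j) ≤ α i j) (i : ι) :
    (B *ᵥ y) i ≤ (B *ᵥ lo) i + ∑ j, α i j :=
  calc (B *ᵥ y) i ≤ (B *ᵥ hi) i := mulVec_mono_of_nonneg hB hy i
    _ = (B *ᵥ lo) i + ∑ j, B i j * (hi j - lo j) := by
      rw [← add_sub_cancel ((B *ᵥ lo) i) ((B *ᵥ hi) i), ← Pi.sub_apply, ← mulVec_sub]; rfl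
    _ ≤ (B *ᵥ lo) i + ∑ j, α i j := by gcongr with j; exact hα i j

theorem stmt_1_general {n p m : ℕ}
    (A : Matrix (Fin n) (Fin p) ℝ) (B : Matrix (Fin n) (Fin m) ℝ)
    (g : Fin n → ℝ) (slo shi : Fin m → ℝ)
    (hB : ∀ i j, 0 ≤ B i j)
    (x : Fin p → ℝ) (α : Matrix (Fin n) (Fin m) ℝ)
    (h1 : ∀ i, A.mulVec x i + B.mulVec slo i + ∑ j, α i j ≤ g i)
    (h2 : ∀ i j, B i j * (shi j - slo j) ≤ α i j) :
    ∀ y : Fin m → ℝ, slo ≤ y → y ≤ shi →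
      A.mulVec x + B.mulVec y ≤ g := by
  intro y _ hy i
  calc (A *ᵥ x + B *ᵥ y) i = (A *ᵥ x) i + (B *ᵥ y) i := rfl
    _ ≤ (A *ᵥ x) i + ((B *ᵥ slo) i + ∑ j, α i j) := by
      gcongr
      exact mulVec_apply_le_mulVec_add_sum hB hy h2 i
    _ ≤ g i := by rw [← add_assoc]; exact h1 i

/-- Proposition 2: sufficient condition for the interval `[s̲, s̄]` to be admissible,
i.e. every `y` in it is feasible with the same `x`. -/
theorem stmt_1 {n p m : ℕ}
    (A : Matrix (Fin n) (Fin p) ℝ) (B : Matrix (Fin n) (Fin m) ℝ)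
    (g : Fin n → ℝ) (slo shi : Fin m → ℝ)
    (hB : ∀ i j, 0 ≤ B i j) (hs : slo ≤ shi)
    (x : Fin p → ℝ) (α : Matrix (Fin n) (Fin m) ℝ)
    (hx : 0 ≤ x) (hα : ∀ i j, 0 ≤ α i j)
    (h1 : ∀ i, A.mulVec x i + B.mulVec slo i + ∑ j, α i j ≤ g i)
    (h2 : ∀ i j, B i j * (shi j - slo j) ≤ α i j) :
    ∀ y : Fin m → ℝ, slo ≤ y → y ≤ shi →
      A.mulVec x + B.mulVec y ≤ g :=
  stmt_1_general A B g slo shi hB x α h1 h2
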